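/- For n ≥ 2, the number of parking functions of size n whose parking permutation avoids 132, 213, 231, and 312 equals n! + 1. -/

import Mathlib

open Finset

noncomputable section

/-- The parking process over the first `k` cars (cars are `0,...,k-1`, i.e. cars `1,...,k`
in 1-indexed terms): returns `some occ` where `occ` maps each spot to the car parked there
(`none` meaning empty), or `none` if some car failed to park.  Car `c` drives to its
preferred spot `f c` and parks at the first free spot with index `≥ f c`, failing if
no such spot exists. -/
def parkAux {n : ℕ} (f : Fin n → Fin n) : ℕ → Option (Fin n → Option (Fin n))
  | 0 => some fun _ => none
  | k + 1 =>
    (parkAux f k).bind fun occ =>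
      if h : k < n then
        if hS : (Finset.univ.filter fun s => f ⟨k, h⟩ ≤ s ∧ occ s = none).Nonempty then
          some (Function.update occ
            ((Finset.univ.filter fun s => f ⟨k, h⟩ ≤ s ∧ occ s = none).min' hS)
            (some ⟨k, h⟩))
        else none
      else some occ

/-- All `n` cars park successfully. -/
def AllPark {n : ℕ} (f : Fin n → Fin n) : Prop := (parkAux f n).isSome

/-- `f` is a parking function: for every `i ∈ [n]`, at least `i` cars prefer
the first `i` spots.  (Here `i : Fin n` denotes the `(i+1)`-st spot, 0-indexed.) -/
def IsParkingFunction {n : ℕ} (f : Fin n → Fin n) : Prop :=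
  ∀ i : Fin n, i.val + 1 ≤ (Finset.univ.filter fun j => f j ≤ i).card

/-- `ρ` is the parking permutation of `f`: after all cars have parked,
spot `i` is occupied by car `ρ i`. -/
def IsParkingPerm {n : ℕ} (f : Fin n → Fin n) (ρ : Equiv.Perm (Fin n)) : Prop :=
  parkAux f n = some fun i => some (ρ i)

/-- `π` contains `σ` as a pattern. -/
def ContainsPattern {n m : ℕ} (π : Equiv.Perm (Fin n)) (σ : Equiv.Perm (Fin m)) : Prop :=
  ∃ g : Fin m → Fin n, StrictMono g ∧ ∀ a b : Fin m, σ a < σ b ↔ π (g a) < π (g b)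

/-- `ρ` avoids every pattern in the list `pats`. -/
def AvoidsAll {n : ℕ} (ρ : Equiv.Perm (Fin n)) (pats : List (Equiv.Perm (Fin 3))) : Prop :=
  ∀ σ ∈ pats, ¬ ContainsPattern ρ σ

/-- The number of parking functions of size `n` whose parking permutation avoids
all patterns in `pats`. -/
def pk (n : ℕ) (pats : List (Equiv.Perm (Fin 3))) : ℕ :=
  Nat.card {f : Fin n → Fin n // IsParkingFunction f ∧
    ∃ ρ : Equiv.Perm (Fin n), IsParkingPerm f ρ ∧ AvoidsAll ρ pats}

def p123 : Equiv.Perm (Fin 3) := Equiv.ofBijective ![0, 1, 2] (by decide)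
def p132 : Equiv.Perm (Fin 3) := Equiv.ofBijective ![0, 2, 1] (by decide)
def p213 : Equiv.Perm (Fin 3) := Equiv.ofBijective ![1, 0, 2] (by decide)
def p231 : Equiv.Perm (Fin 3) := Equiv.ofBijective ![1, 2, 0] (by decide)
def p312 : Equiv.Perm (Fin 3) := Equiv.ofBijective ![2, 0, 1] (by decide)
def p321 : Equiv.Perm (Fin 3) := Equiv.ofBijective ![2, 1, 0] (by decide)

/-!
A permutation avoiding 132, 213, 231 and 312 is increasing or decreasing on every triple of
positions, hence it is the identity or the reversal. The parking process ends with permutation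
`ρ` exactly when each car `c` finds its final spot `ρ⁻¹ c` to be the first spot at or after its
preference that no earlier car holds. For the identity this says `f c ≤ c`, which leaves `n!`
choices of `f`; for the reversal it forces `f = Fin.rev`, which for `n ≥ 2` is not among them.
-/

theorem strictMono_or_strictAnti_of_forall_lt_lt {ι α : Type*} [LinearOrder ι] [LinearOrder α]
    {g : ι → α} (hg : Function.Injective g)
    (h : ∀ a b c, a < b → b < c → (g a < g b ∧ g b < g c) ∨ (g b < g a ∧ g c < g b)) :
    StrictMono g ∨ StrictAnti g := by
  have left : ∀ i j l, i < j → i < l → g i < g j → g i < g l := by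
    intro i j l hij hil hj
    rcases lt_trichotomy j l with hjl | rfl | hlj
    · rcases h i j l hij hjl with h' | h' <;> order
    · exact hj
    · rcases h i l j hil hlj with h' | h' <;> order
  have right : ∀ i j l, i < l → j < l → g i < g l → g j < g l := by
    intro i j l hil hjl hi
    rcases lt_trichotomy i j with hij | rfl | hji
    · rcases h i j l hij hjl with h' | h' <;> order
    · exact hi
    · rcases h j i l hji hil with h' | h' <;> order
  have key : ∀ i j k l, i < j → k < l → g i < g j → g k < g l := by
    intro i j k l hij hkl hi
    have hiM := left i j (max j l) hij (lt_max_of_lt_left hij) hi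
    have hkM := right i k (max j l) (lt_max_of_lt_left hij) (lt_max_of_lt_right hkl) hiM
    exact left k (max j l) l (lt_max_of_lt_right hkl) hkl hkM
  by_cases hup : ∃ i j, i < j ∧ g i < g j
  · obtain ⟨i, j, hij, hi⟩ := hup
    exact Or.inl fun k l hkl => key i j k l hij hkl hi
  · simp only [not_exists, not_and, not_lt] at hup
    exact Or.inr fun k l hkl => (hup k l hkl).lt_of_ne (hg.ne hkl.ne')

section Patterns

variable {n m : ℕ} {π : Equiv.Perm (Fin n)} {σ : Equiv.Perm (Fin m)}

theorem ContainsPattern.strictMono (h : ContainsPattern π σ) (hπ : StrictMono π) :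
    StrictMono σ := by
  obtain ⟨g, hg, hσ⟩ := h
  exact fun a b hab => (hσ a b).2 (hπ (hg hab))

theorem ContainsPattern.strictAnti (h : ContainsPattern π σ) (hπ : StrictAnti π) :
    StrictAnti σ := by
  obtain ⟨g, hg, hσ⟩ := h
  exact fun a b hab => (hσ b a).2 (hπ (hg hab))

theorem containsPattern_of_strictMono_of_forall_lt {g : Fin m → Fin n} (hg : StrictMono g)
    (h : ∀ x y, σ x < σ y → π (g x) < π (g y)) : ContainsPattern π σ := by
  refine ⟨g, hg, fun x y => ⟨h x y, fun hπ => ?_⟩⟩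
  by_contra hσ
  rcases (not_lt.mp hσ).lt_or_eq with hyx | hyx
  · exact lt_asymm hπ (h y x hyx)
  · exact lt_irrefl _ (σ.injective hyx ▸ hπ)

theorem lt_lt_or_gt_gt_of_avoidsAll {ρ : Equiv.Perm (Fin n)}
    (hρ : AvoidsAll ρ [p132, p213, p231, p312]) {a b c : Fin n} (hab : a < b) (hbc : b < c) :
    (ρ a < ρ b ∧ ρ b < ρ c) ∨ (ρ b < ρ a ∧ ρ c < ρ b) := by
  have hg : StrictMono ![a, b, c] := by simp [hab, hbc]
  have avoids : ∀ σ ∈ [p132, p213, p231, p312],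
      ¬ ∀ x y, σ x < σ y → ρ (![a, b, c] x) < ρ (![a, b, c] y) :=
    fun σ hσ h => hρ σ hσ (containsPattern_of_strictMono_of_forall_lt hg h)
  have hab' : ρ a ≠ ρ b := ρ.injective.ne hab.ne
  have hbc' : ρ b ≠ ρ c := ρ.injective.ne hbc.ne
  have hac' : ρ a ≠ ρ c := ρ.injective.ne (hab.trans hbc).ne
  rcases hab'.lt_or_gt with h1 | h1 <;> rcases hbc'.lt_or_gt with h2 | h2 <;>
    rcases hac'.lt_or_gt with h3 | h3
  -- the four orderings other than 123 and 321 are exactly the forbidden patterns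
  · exact Or.inl ⟨h1, h2⟩
  · order
  · exact (avoids p132 (by simp) fun x y => by fin_cases x <;> fin_cases y <;> simp [p132, *]).elim
  · exact (avoids p231 (by simp) fun x y => by fin_cases x <;> fin_cases y <;> simp [p231, *]).elim
  · exact (avoids p213 (by simp) fun x y => by fin_cases x <;> fin_cases y <;> simp [p213, *]).elim
  · exact (avoids p312 (by simp) fun x y => by fin_cases x <;> fin_cases y <;> simp [p312, *]).elim
  · order
  · exact Or.inr ⟨h1, h2⟩

theorem avoidsAll_iff_strictMono_or_strictAnti {ρ : Equiv.Perm (Fin n)} :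
    AvoidsAll ρ [p132, p213, p231, p312] ↔ StrictMono ρ ∨ StrictAnti ρ := by
  refine ⟨fun hρ => strictMono_or_strictAnti_of_forall_lt_lt ρ.injective
    fun a b c => lt_lt_or_gt_gt_of_avoidsAll hρ, ?_⟩
  have hpats : ∀ σ ∈ [p132, p213, p231, p312], ¬ StrictMono σ ∧ ¬ StrictAnti σ := by
    decide
  rintro (hmono | hanti) σ hσ hcont
  · exact (hpats σ hσ).1 (hcont.strictMono hmono)
  · exact (hpats σ hσ).2 (hcont.strictAnti hanti)

theorem Equiv.Perm.eq_one_of_strictMono {ρ : Equiv.Perm (Fin n)} (h : StrictMono ρ) : ρ = 1 :=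
  Equiv.ext (congrFun h.eq_id)

theorem Equiv.Perm.eq_revPerm_of_strictAnti {ρ : Equiv.Perm (Fin n)} (h : StrictAnti ρ) :
    ρ = Fin.revPerm := by
  have := congrFun (h.comp Fin.rev_strictAnti).eq_id
  ext i
  simpa using congrArg Fin.val (this i.rev)

end Patterns

section Parking

variable {n : ℕ} {f : Fin n → Fin n} {ρ : Equiv.Perm (Fin n)}

def partialOccupancy (ρ : Equiv.Perm (Fin n)) (k : ℕ) : Fin n → Option (Fin n) :=
  fun s => if (ρ s : ℕ) < k then some (ρ s) else none

/-- Car `c` ends at spot `ρ⁻¹ c`, at or after its preference, and every spot it passes on the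
way there is held by an earlier car. -/
def ParksFirstFree (f : Fin n → Fin n) (ρ : Equiv.Perm (Fin n)) (c : Fin n) : Prop :=
  f c ≤ ρ.symm c ∧ ∀ t, f c ≤ t → t < ρ.symm c → ρ t < c

theorem partialOccupancy_eq_none_iff {k : ℕ} {s : Fin n} :
    partialOccupancy ρ k s = none ↔ k ≤ ρ s := by
  simp [partialOccupancy]

theorem update_partialOccupancy {k : ℕ} (hk : k < n) :
    Function.update (partialOccupancy ρ k) (ρ.symm ⟨k, hk⟩) (some ⟨k, hk⟩) =
      partialOccupancy ρ (k + 1) := by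
  funext s
  by_cases hs : s = ρ.symm ⟨k, hk⟩
  · subst hs
    simp [partialOccupancy]
  · have : (ρ s : ℕ) ≠ k := fun h => hs (ρ.eq_symm_apply.mpr (Fin.ext h))
    simp only [Function.update_of_ne hs, partialOccupancy]
    split_ifs <;> first | rfl | omega

theorem min'_freeSpots_eq_symm_iff {k : ℕ} (hk : k < n)
    (hS : (univ.filter fun s => f ⟨k, hk⟩ ≤ s ∧ partialOccupancy ρ k s = none).Nonempty) :
    (univ.filter fun s => f ⟨k, hk⟩ ≤ s ∧ partialOccupancy ρ k s = none).min' hS =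
      ρ.symm ⟨k, hk⟩ ↔ ParksFirstFree f ρ ⟨k, hk⟩ := by
  simp only [Finset.min'_eq_iff, mem_filter, mem_univ, true_and, partialOccupancy_eq_none_iff,
    Equiv.apply_symm_apply, le_refl, and_true, ParksFirstFree]
  refine and_congr_right fun _ => ⟨fun h t ht hts => ?_, fun h t ⟨ht, hkt⟩ => ?_⟩
  · by_contra hlt
    exact (h t ⟨ht, by simpa [Fin.lt_def] using hlt⟩).not_gt hts
  · by_contra hlt
    exact (Fin.lt_def.mp (h t ht (not_le.mp hlt))).not_ge hkt

theorem parkAux_succ_eq_partialOccupancy_iff {k : ℕ} (hk : k < n) :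
    parkAux f (k + 1) = some (partialOccupancy ρ (k + 1)) ↔
      parkAux f k = some (partialOccupancy ρ k) ∧ ParksFirstFree f ρ ⟨k, hk⟩ := by
  constructor
  · intro h
    rw [parkAux] at h
    obtain ⟨occ, hocc, h⟩ := Option.bind_eq_some_iff.mp h
    rw [dif_pos hk] at h
    split_ifs at h with hS
    set m := (univ.filter fun s => f ⟨k, hk⟩ ≤ s ∧ occ s = none).min' hS
    have hm := (mem_filter.mp (min'_mem _ hS)).2
    have h := Option.some_inj.mp h
    have hmc : m = ρ.symm ⟨k, hk⟩ := by
      have := congrFun h m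
      simp only [Function.update_self, partialOccupancy] at this
      split_ifs at this
      exact ρ.eq_symm_apply.mpr (Option.some_inj.mp this).symm
    have hocc_eq : occ = partialOccupancy ρ k := by
      rw [← update_partialOccupancy hk, ← hmc] at h
      funext s
      by_cases hs : s = m
      · rw [hs, hm.2, eq_comm, partialOccupancy_eq_none_iff, hmc, Equiv.apply_symm_apply]
      · simpa [Function.update_of_ne hs] using congrFun h s
    subst hocc_eq
    exact ⟨hocc, (min'_freeSpots_eq_symm_iff hk hS).mp hmc⟩
  · rintro ⟨h, hc⟩
    have hS : (univ.filter fun s => f ⟨k, hk⟩ ≤ s ∧ partialOccupancy ρ k s = none).Nonempty :=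
      ⟨ρ.symm ⟨k, hk⟩, by simp [partialOccupancy_eq_none_iff, hc.1]⟩
    rw [parkAux, h, Option.bind_some, dif_pos hk, dif_pos hS,
      (min'_freeSpots_eq_symm_iff hk hS).mpr hc, update_partialOccupancy]

theorem parkAux_eq_partialOccupancy_iff {k : ℕ} (hk : k ≤ n) :
    parkAux f k = some (partialOccupancy ρ k) ↔
      ∀ c : Fin n, (c : ℕ) < k → ParksFirstFree f ρ c := by
  induction k with
  | zero => simp [parkAux, partialOccupancy, funext_iff]
  | succ k ih =>
    rw [parkAux_succ_eq_partialOccupancy_iff hk, ih (Nat.le_of_succ_le hk)]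
    constructor
    · rintro ⟨hearlier, hlast⟩ c hc
      rcases Nat.lt_succ_iff_lt_or_eq.mp hc with hc | hc
      · exact hearlier c hc
      · exact (Fin.ext hc : c = ⟨k, _⟩) ▸ hlast
    · exact fun h => ⟨fun c hc => h c (Nat.lt_succ_of_lt hc), h _ (Nat.lt_succ_self k)⟩

theorem isParkingPerm_iff : IsParkingPerm f ρ ↔ ∀ c, ParksFirstFree f ρ c := by
  have : partialOccupancy ρ n = fun s => some (ρ s) := by
    funext s
    simp [partialOccupancy]
  rw [IsParkingPerm, ← this, parkAux_eq_partialOccupancy_iff le_rfl]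
  simp

theorem isParkingPerm_one_iff : IsParkingPerm f 1 ↔ ∀ c, f c ≤ c := by
  simp [isParkingPerm_iff, ParksFirstFree, Equiv.Perm.one_def]

theorem isParkingPerm_revPerm_iff : IsParkingPerm f Fin.revPerm ↔ f = Fin.rev := by
  simp only [isParkingPerm_iff, ParksFirstFree, funext_iff, Fin.revPerm_symm, Fin.revPerm_apply,
    Fin.rev_lt_iff]
  refine forall_congr' fun c => ⟨fun ⟨hle, hfirst⟩ => hle.antisymm ?_, fun h => ?_⟩
  · exact not_lt.mp fun hlt => (hfirst _ le_rfl hlt).not_gt hlt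
  · exact ⟨h.le, fun t ht hlt => absurd (h ▸ ht) (not_le.mpr hlt)⟩

theorem IsParkingPerm.isParkingFunction (h : IsParkingPerm f ρ) : IsParkingFunction f := by
  intro i
  calc i.val + 1 = ((Iic i).map ρ.toEmbedding).card := by simp
    _ ≤ _ := card_le_card fun j hj => by
      obtain ⟨s, hs, rfl⟩ := mem_map.mp hj
      simpa using ((isParkingPerm_iff.mp h (ρ s)).1.trans_eq (ρ.symm_apply_apply s)).trans
        (mem_Iic.mp hs)

end Parking

theorem ncard_setOf_forall_le_self (n : ℕ) :
    {f : Fin n → Fin n | ∀ i, f i ≤ i}.ncard = n.factorial := by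
  have : {f : Fin n → Fin n | ∀ i, f i ≤ i} = ↑(Fintype.piFinset fun i : Fin n => Iic i) := by
    ext f
    simp
  rw [this, Set.ncard_coe_finset, Fintype.card_piFinset]
  simp only [Fin.card_Iic]
  rw [Fin.prod_univ_eq_prod_range (· + 1) n, prod_range_add_one_eq_factorial]

theorem setOf_isParkingFunction_avoidsAll_eq (n : ℕ) :
    {f : Fin n → Fin n | IsParkingFunction f ∧
      ∃ ρ : Equiv.Perm (Fin n), IsParkingPerm f ρ ∧ AvoidsAll ρ [p132, p213, p231, p312]} =
      insert Fin.rev {f | ∀ i, f i ≤ i} := by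
  ext f
  simp only [avoidsAll_iff_strictMono_or_strictAnti, Set.mem_ofPred_eq, Set.mem_insert_iff]
  constructor
  · rintro ⟨-, ρ, hf, hmono | hanti⟩
    · exact Or.inr (isParkingPerm_one_iff.mp (Equiv.Perm.eq_one_of_strictMono hmono ▸ hf))
    · exact Or.inl (isParkingPerm_revPerm_iff.mp (Equiv.Perm.eq_revPerm_of_strictAnti hanti ▸ hf))
  · rintro (rfl | hf)
    · have h : IsParkingPerm Fin.rev (Fin.revPerm : Equiv.Perm (Fin n)) :=
        isParkingPerm_revPerm_iff.mpr rfl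
      exact ⟨h.isParkingFunction, _, h, Or.inr Fin.rev_strictAnti⟩
    · have h := isParkingPerm_one_iff.mpr hf
      exact ⟨h.isParkingFunction, 1, h, Or.inl strictMono_id⟩

theorem stmt5 (n : ℕ) (hn : 2 ≤ n) :
    pk n [p132, p213, p231, p312] = n.factorial + 1 := by
  have hrev : Fin.rev ∉ {f : Fin n → Fin n | ∀ i, f i ≤ i} := fun h => by
    have := Fin.le_def.mp (h ⟨0, by omega⟩)
    simp only [Fin.val_rev] at this
    omega
  rw [pk, ← Set.coe_ofPred, Nat.card_coe_set_eq, setOf_isParkingFunction_avoidsAll_eq,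
    Set.ncard_insert_of_notMem hrev, ncard_setOf_forall_le_self]
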